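/- arXiv:2106.13261 — 2 statements merged into one kernel-verified Lean document; each statement's English description precedes it below -/
import Mathlib

section
/- In a compact topometric space, for any two distinct points x, y there exist open neighborhoods U ∋ x and V ∋ y and ε > 0 such that U^{<ε} ∩ V = ∅; more generally, for any x ≠ y and any r < ∂(x,y) there are open neighborhoods U ∋ x, V ∋ y with cl(U)^{≤r} ∩ cl(V) = ∅. -/
open Set Topology

/-- `(X, t, dist)` is a topometric space: `t` is a topology on the metric space `X`,
the metric topology refines `t`, and the metric is lower semi-continuous w.r.t. `t × t`. -/
def IsTopometric {X : Type*} [MetricSpace X] (t : TopologicalSpace X) : Prop :=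
  ((inferInstance : TopologicalSpace X) ≤ t) ∧
    ∀ ε : ℝ, 0 < ε →
      IsClosed[@instTopologicalSpaceProd X X t t] {p : X × X | dist p.1 p.2 ≤ ε}

/-- The metric is open w.r.t. `t`: for every `t`-open `U` and `ε > 0`,
`U^{<ε} = {z : ∂(z,U) < ε}` is `t`-open. -/
def HasOpenMetric {X : Type*} [MetricSpace X] (t : TopologicalSpace X) : Prop :=
  ∀ U : Set X, IsOpen[t] U → ∀ ε : ℝ, 0 < ε →
    IsOpen[t] {z : X | ∃ u ∈ U, dist z u < ε}

namespace IsTopometric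

variable {X : Type*} [MetricSpace X] {t : TopologicalSpace X}

theorem exists_isOpen_forall_lt_dist (htm : IsTopometric t) {a b : X} {r : ℝ} (hr : 0 < r)
    (hab : r < dist a b) :
    ∃ U V : Set X, IsOpen[t] U ∧ IsOpen[t] V ∧ a ∈ U ∧ b ∈ V ∧
      ∀ u ∈ U, ∀ v ∈ V, r < dist u v := by
  obtain ⟨U, V, hU, hV, ha, hb, hUV⟩ :=
    (@isOpen_prod_iff X X t t _).1 (htm.2 r hr).isOpen_compl a b (by simpa using hab)
  exact ⟨U, V, hU, hV, ha, hb, fun u hu v hv => by simpa using hUV (mk_mem_prod hu hv)⟩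

theorem t2Space (htm : IsTopometric t) : @T2Space X t := by
  let := t
  refine ⟨fun a b hab => ?_⟩
  have hd : 0 < dist a b := dist_pos.2 hab
  obtain ⟨U, V, hU, hV, ha, hb, hUV⟩ :=
    htm.exists_isOpen_forall_lt_dist (half_pos hd) (half_lt_self hd)
  refine ⟨U, V, hU, hV, ha, hb, disjoint_left.2 fun z hzU hzV => ?_⟩
  linarith [hUV z hzU z hzV, dist_self z]

/-- Compactness makes `t` regular, so the neighbourhoods can be shrunk to ones whose closures
are still `r`-apart; `r` is first raised to a positive value below `dist a b`. -/
theorem exists_isOpen_forall_closure_lt_dist (htm : IsTopometric t) (hcomp : @CompactSpace X t)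
    {a b : X} (hab : a ≠ b) {r : ℝ} (hr : r < dist a b) :
    ∃ U V : Set X, IsOpen[t] U ∧ IsOpen[t] V ∧ a ∈ U ∧ b ∈ V ∧
      ∀ u ∈ closure[t] U, ∀ v ∈ closure[t] V, r < dist u v := by
  let := t
  have := htm.t2Space
  have hd : 0 < dist a b := dist_pos.2 hab
  obtain ⟨U₀, V₀, hU₀, hV₀, ha₀, hb₀, hUV₀⟩ := htm.exists_isOpen_forall_lt_dist
    (lt_max_of_lt_right (half_pos hd)) (max_lt hr (half_lt_self hd))
  obtain ⟨U, ⟨haU, hU⟩, hUU₀⟩ := (hasBasis_opens_closure a).mem_iff.1 (hU₀.mem_nhds ha₀)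
  obtain ⟨V, ⟨hbV, hV⟩, hVV₀⟩ := (hasBasis_opens_closure b).mem_iff.1 (hV₀.mem_nhds hb₀)
  exact ⟨U, V, hU, hV, haU, hbV, fun u hu v hv =>
    (le_max_left _ _).trans_lt (hUV₀ u (hUU₀ hu) v (hVV₀ hv))⟩

end IsTopometric

/-- separation in compact topometric spaces: distinct points have open
neighborhoods `U ∋ x`, `V ∋ y` with `U^{<ε} ∩ V = ∅`; more generally for any
`r < ∂(x,y)` there are `U, V` with `cl(U)^{≤r} ∩ cl(V) = ∅`. -/
theorem topometric_separation {X : Type*} [MetricSpace X] (t : TopologicalSpace X)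
    (hcomp : @CompactSpace X t) (htm : IsTopometric t)
    (x y : X) (hxy : x ≠ y) :
    (∃ ε : ℝ, 0 < ε ∧ ∃ U V : Set X, IsOpen[t] U ∧ IsOpen[t] V ∧ x ∈ U ∧ y ∈ V ∧
      {z : X | ∃ u ∈ U, dist z u < ε} ∩ V = ∅) ∧
    (∀ r : ℝ, r < dist x y → ∃ U V : Set X, IsOpen[t] U ∧ IsOpen[t] V ∧ x ∈ U ∧ y ∈ V ∧
      {z : X | ∃ u ∈ @closure X t U, dist z u ≤ r} ∩ @closure X t V = ∅) := by
  have hd : 0 < dist x y := dist_pos.2 hxy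
  constructor
  · obtain ⟨U, V, hU, hV, hxU, hyV, hUV⟩ :=
      htm.exists_isOpen_forall_lt_dist (half_pos hd) (half_lt_self hd)
    refine ⟨dist x y / 2, half_pos hd, U, V, hU, hV, hxU, hyV, ?_⟩
    refine eq_empty_of_forall_notMem fun z ⟨⟨u, hu, hzu⟩, hz⟩ => ?_
    linarith [hUV u hu z hz, dist_comm z u]
  · intro r hr
    obtain ⟨U, V, hU, hV, hxU, hyV, hUV⟩ := htm.exists_isOpen_forall_closure_lt_dist hcomp hxy hr
    refine ⟨U, V, hU, hV, hxU, hyV, ?_⟩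
    refine eq_empty_of_forall_notMem fun z ⟨⟨u, hu, hzu⟩, hz⟩ => ?_
    linarith [hUV u hu z hz, dist_comm z u]
end

section
/- In F(X), for any three elements E, F, G in the same finite distance component, [E,G] ⊆ [E,F] ∪ [F,G]. -/
open Set

/-- An element of the generic ℝ-forest `F(X)` (simplified): a 1-Lipschitz function
from a compact subset of `ℝ≥0` containing `0` into a metric space `X`. -/
structure FPath (X : Type*) [MetricSpace X] where
  dom : Set ℝ
  compact' : IsCompact dom
  zero_mem : (0 : ℝ) ∈ dom
  subset_Ici : dom ⊆ Set.Ici 0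
  toFun : ℝ → X
  lip : LipschitzOnWith 1 toFun dom

namespace FPath

variable {X : Type*} [MetricSpace X]

/-- The length `|K| = sup π(K)`. -/
noncomputable def len (K : FPath X) : ℝ := sSup K.dom

/-- `K` and `K'` agree up to `r`: `r` is in both domains and the restrictions to `[0,r]` coincide. -/
def Agree (K K' : FPath X) (r : ℝ) : Prop :=
  r ∈ K.dom ∧ r ∈ K'.dom ∧ K.dom ∩ Set.Icc 0 r = K'.dom ∩ Set.Icc 0 r ∧
    Set.EqOn K.toFun K'.toFun (K.dom ∩ Set.Icc 0 r)

/-- The length `|K ⊓ K'|` of the longest common initial segment. -/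
noncomputable def meetLen (K K' : FPath X) : ℝ := sSup {r | Agree K K' r}

/-- `K` and `K'` are in the same finite distance component. -/
def FinDist (K K' : FPath X) : Prop := K.toFun 0 = K'.toFun 0

/-- The forest metric `d(K,K') = |K| + |K'| - 2|K ⊓ K'|` (meaningful for finite-distance pairs). -/
noncomputable def tdist (K K' : FPath X) : ℝ := K.len + K'.len - 2 * meetLen K K'

/-- `L ⊑ K`: `L` is an initial segment of `K`. -/
def InitSeg (L K : FPath X) : Prop :=
  L.dom = K.dom ∩ Set.Icc 0 L.len ∧ Set.EqOn L.toFun K.toFun L.dom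

/-- `L` belongs to the interval `[K,K'] = {L : K⊓K' ⊑ L ⊑ K or K⊓K' ⊑ L ⊑ K'}`. -/
def MemInterval (K K' L : FPath X) : Prop :=
  ∃ M : FPath X, M.len = meetLen K K' ∧ InitSeg M K ∧ InitSeg M K' ∧
    ((InitSeg M L ∧ InitSeg L K) ∨ (InitSeg M L ∧ InitSeg L K'))

/-- The endpoint value `K_X(|K|)`. -/
noncomputable def endpt (K : FPath X) : X := K.toFun K.len

/-- Distance from `A` to the interval `[K,K']`. -/
noncomputable def idist (A K K' : FPath X) : ℝ :=
  sInf {r | ∃ L : FPath X, MemInterval K K' L ∧ r = A.tdist L}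

/-- The length of the longest common initial segment of a set of paths. -/
noncomputable def setMeetLen (S : Set (FPath X)) : ℝ :=
  sSup {r | ∀ K ∈ S, ∀ K' ∈ S, Agree K K' r}

/-- The diameter of a set of paths. -/
noncomputable def setDiam (S : Set (FPath X)) : ℝ :=
  sSup {r | ∃ K ∈ S, ∃ K' ∈ S, r = K.tdist K'}

end FPath

/-!
Meet lengths satisfy the ultrametric inequality `min |E⊓F| |F⊓G| ≤ |E⊓G|`. Take `L` in `[E,G]`
on the side of `E`, with witness `M`. If `|E⊓F| ≤ |L|`, then `L` lies in `[E,F]`. Otherwise `L`,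
being shorter than `E⊓F`, is also an initial segment of `F`; as `|E⊓G| ≤ |L| < |E⊓F|`, the
ultrametric inequality forces `|F⊓G| = |E⊓G|`, and the same `M` exhibits `L ∈ [F,G]`.
-/

namespace FPath

variable {X : Type*} [MetricSpace X]

lemma le_len {K : FPath X} {r : ℝ} (h : r ∈ K.dom) : r ≤ K.len :=
  le_csSup K.compact'.bddAbove h

lemma len_mem_dom (K : FPath X) : K.len ∈ K.dom :=
  K.compact'.sSup_mem ⟨0, K.zero_mem⟩

lemma inter_Icc_inter_Icc_of_le (s : Set ℝ) {a b : ℝ} (h : b ≤ a) :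
    s ∩ Icc 0 a ∩ Icc 0 b = s ∩ Icc 0 b := by
  rw [inter_assoc, Icc_inter_Icc, max_self, min_eq_right h]

section Agree

variable {K K' K'' : FPath X} {r s t : ℝ}

lemma Agree.mem_dom_iff (h : Agree K K' r) (ht : t ∈ Icc 0 r) : t ∈ K.dom ↔ t ∈ K'.dom := by
  simpa only [mem_inter_iff, and_iff_left ht] using Set.ext_iff.mp h.2.2.1 t

lemma Agree.symm (h : Agree K K' r) : Agree K' K r :=
  ⟨h.2.1, h.1, h.2.2.1.symm, fun _ hx => (h.2.2.2 (h.2.2.1 ▸ hx)).symm⟩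

lemma Agree.trans (h : Agree K K' r) (h' : Agree K' K'' r) : Agree K K'' r :=
  ⟨h.1, h'.2.1, h.2.2.1.trans h'.2.2.1,
    fun _ hx => (h.2.2.2 hx).trans (h'.2.2.2 (h.2.2.1 ▸ hx))⟩

lemma Agree.mono (h : Agree K K' r) (hs : s ∈ K.dom) (hsr : s ≤ r) : Agree K K' s := by
  refine ⟨hs, (h.mem_dom_iff ⟨K.subset_Ici hs, hsr⟩).mp hs, ?_,
    fun x hx => h.2.2.2 ⟨hx.1, hx.2.1, hx.2.2.trans hsr⟩⟩
  rw [← inter_Icc_inter_Icc_of_le K.dom hsr, ← inter_Icc_inter_Icc_of_le K'.dom hsr, h.2.2.1]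

lemma agree_of_forall_lt (hK : r ∈ K.dom) (hK' : r ∈ K'.dom) (heq : K.toFun r = K'.toFun r)
    (h : ∀ t ∈ Ico 0 r, ∃ s, Agree K K' s ∧ t < s) : Agree K K' r := by
  refine ⟨hK, hK', ?_, ?_⟩
  · ext t
    refine and_congr_left fun ht => ?_
    rcases ht.2.eq_or_lt with rfl | hlt
    · exact iff_of_true hK hK'
    · obtain ⟨s, hs, hts⟩ := h t ⟨ht.1, hlt⟩
      exact hs.mem_dom_iff ⟨ht.1, hts.le⟩
  · rintro t ⟨htK, ht0, htr⟩
    rcases htr.eq_or_lt with rfl | hlt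
    · exact heq
    · obtain ⟨s, hs, hts⟩ := h t ⟨ht0, hlt⟩
      exact hs.2.2.2 ⟨htK, ht0, hts.le⟩

lemma agree_zero (h : K.FinDist K') : Agree K K' 0 :=
  agree_of_forall_lt K.zero_mem K'.zero_mem h fun _ ht => (lt_irrefl 0 (ht.1.trans_lt ht.2)).elim

lemma le_meetLen (h : Agree K K' r) : r ≤ meetLen K K' :=
  le_csSup (K.compact'.bddAbove.mono fun _ hs => hs.1) h

lemma meetLen_comm (K K' : FPath X) : meetLen K K' = meetLen K' K :=
  congrArg sSup (Set.ext fun _ => ⟨Agree.symm, Agree.symm⟩)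

/-- The agreement points lie in the coincidence set of `K` and `K'`, which is closed because the
domains are compact and the paths continuous; so its supremum is an agreement point. -/
lemma agree_meetLen (h : K.FinDist K') : Agree K K' (meetLen K K') := by
  set S := {r | Agree K K' r}
  have hne : S.Nonempty := ⟨0, agree_zero h⟩
  have hcoinc : closure S ⊆ {x ∈ K.dom ∩ K'.dom | K.toFun x = K'.toFun x} :=
    closure_minimal (fun r hr => ⟨⟨hr.1, hr.2.1⟩, hr.2.2.2 ⟨hr.1, K.subset_Ici hr.1, le_rfl⟩⟩)
      ((K.compact'.isClosed.inter K'.compact'.isClosed).isClosed_eq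
        (K.lip.continuousOn.mono inter_subset_left) (K'.lip.continuousOn.mono inter_subset_right))
  obtain ⟨⟨hK, hK'⟩, heq⟩ :=
    hcoinc (csSup_mem_closure hne (K.compact'.bddAbove.mono fun _ hs => hs.1))
  exact agree_of_forall_lt hK hK' heq fun _ ht => exists_lt_of_lt_csSup hne ht.2

lemma min_meetLen_le_meetLen (hKK' : K.FinDist K') (hK'K'' : K'.FinDist K'') :
    min (meetLen K K') (meetLen K' K'') ≤ meetLen K K'' := by
  have h₁ := agree_meetLen hKK'
  have h₂ := agree_meetLen hK'K''
  have hmem : min (meetLen K K') (meetLen K' K'') ∈ K'.dom := by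
    rcases min_choice (meetLen K K') (meetLen K' K'') with hmin | hmin <;> rw [hmin]
    exacts [h₁.2.1, h₂.1]
  exact le_meetLen <|
    (h₁.symm.mono hmem (min_le_left _ _)).symm.trans (h₂.mono hmem (min_le_right _ _))

end Agree

section InitSeg

variable {M L K K' : FPath X} {r : ℝ}

lemma InitSeg.apply_zero (h : InitSeg M K) : M.toFun 0 = K.toFun 0 :=
  h.2 M.zero_mem

lemma InitSeg.len_le (h : InitSeg M K) : M.len ≤ K.len :=
  le_len (h.1 ▸ M.len_mem_dom).1

lemma InitSeg.agree (hK : InitSeg M K) (hK' : InitSeg M K') : Agree K K' M.len :=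
  ⟨(hK.1 ▸ M.len_mem_dom).1, (hK'.1 ▸ M.len_mem_dom).1, hK.1.symm.trans hK'.1,
    fun _ hx => (hK.2 (hK.1 ▸ hx)).symm.trans (hK'.2 (hK.1 ▸ hx))⟩

lemma InitSeg.of_agree (hL : InitSeg L K) (h : Agree K K' r) (hr : L.len ≤ r) :
    InitSeg L K' := by
  refine ⟨?_, fun x hx => ?_⟩
  · rw [hL.1, ← inter_Icc_inter_Icc_of_le K.dom hr, h.2.2.1, inter_Icc_inter_Icc_of_le K'.dom hr]
  · have hx' := hL.1 ▸ hx
    exact (hL.2 hx).trans (h.2.2.2 ⟨hx'.1, hx'.2.1, hx'.2.2.trans hr⟩)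

lemma InitSeg.of_len_le (hM : InitSeg M K) (hL : InitSeg L K) (h : M.len ≤ L.len) :
    InitSeg M L := by
  have hdom : M.dom = L.dom ∩ Icc 0 M.len := by
    rw [hM.1, hL.1, inter_Icc_inter_Icc_of_le K.dom h]
  exact ⟨hdom, fun x hx => (hM.2 hx).trans (hL.2 (hdom ▸ hx).1).symm⟩

end InitSeg

def trunc (K : FPath X) (r : ℝ) (hr : r ∈ K.dom) : FPath X where
  dom := K.dom ∩ Icc 0 r
  compact' := K.compact'.inter_right isClosed_Icc
  zero_mem := ⟨K.zero_mem, le_rfl, K.subset_Ici hr⟩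
  subset_Ici := fun _ hx => K.subset_Ici hx.1
  toFun := K.toFun
  lip := K.lip.mono inter_subset_left

lemma len_trunc (K : FPath X) {r : ℝ} (hr : r ∈ K.dom) : (K.trunc r hr).len = r :=
  IsGreatest.csSup_eq ⟨⟨hr, K.subset_Ici hr, le_rfl⟩, fun _ hx => hx.2.2⟩

lemma trunc_initSeg (K : FPath X) {r : ℝ} (hr : r ∈ K.dom) : InitSeg (K.trunc r hr) K :=
  ⟨by rw [len_trunc]; rfl, fun _ _ => rfl⟩

lemma MemInterval.symm {K K' L : FPath X} (h : MemInterval K K' L) : MemInterval K' K L := by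
  obtain ⟨M, hlen, hK, hK', hL⟩ := h
  exact ⟨M, hlen.trans (meetLen_comm K K'), hK', hK, hL.symm⟩

section Triangle

variable {E F G L M : FPath X}

lemma memInterval_of_meetLen_le_len (hEF : E.FinDist F) (hLE : InitSeg L E)
    (h : meetLen E F ≤ L.len) : MemInterval E F L := by
  have hA := agree_meetLen hEF
  have hMlen := E.len_trunc hA.1
  have hME := E.trunc_initSeg hA.1
  exact ⟨_, hMlen, hME, hME.of_agree hA hMlen.le,
    Or.inl ⟨hME.of_len_le hLE (hMlen.le.trans h), hLE⟩⟩

lemma memInterval_of_len_lt_meetLen (hEF : E.FinDist F) (hMlen : M.len = meetLen E G)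
    (hME : InitSeg M E) (hMG : InitSeg M G) (hML : InitSeg M L) (hLE : InitSeg L E)
    (h : L.len < meetLen E F) : MemInterval F G L := by
  have hA := agree_meetLen hEF
  have hMF : InitSeg M F := hME.of_agree hA (hML.len_le.trans h.le)
  have hFG : F.FinDist G := hMF.apply_zero.symm.trans hMG.apply_zero
  have hEG_lt : meetLen E G < meetLen E F := hMlen ▸ hML.len_le.trans_lt h
  have hFG_le : meetLen F G ≤ M.len :=
    hMlen ▸ (min_le_iff.mp (min_meetLen_le_meetLen hEF hFG)).resolve_left hEG_lt.not_ge
  exact ⟨M, le_antisymm (le_meetLen (hMF.agree hMG)) hFG_le, hMF, hMG,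
    Or.inl ⟨hML, hLE.of_agree hA h.le⟩⟩

lemma memInterval_or_memInterval_of_initSeg (hEF : E.FinDist F) (hMlen : M.len = meetLen E G)
    (hME : InitSeg M E) (hMG : InitSeg M G) (hML : InitSeg M L) (hLE : InitSeg L E) :
    MemInterval E F L ∨ MemInterval F G L :=
  (le_or_gt (meetLen E F) L.len).imp (memInterval_of_meetLen_le_len hEF hLE)
    (memInterval_of_len_lt_meetLen hEF hMlen hME hMG hML hLE)

end Triangle

end FPath

theorem fpath_interval_subset_union_general {X : Type*} [MetricSpace X] (E F G : FPath X)
    (hEF : E.FinDist F) :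
    ∀ L : FPath X, FPath.MemInterval E G L →
      FPath.MemInterval E F L ∨ FPath.MemInterval F G L := by
  rintro L ⟨M, hMlen, hME, hMG, ⟨hML, hLE⟩ | ⟨hML, hLG⟩⟩
  · exact FPath.memInterval_or_memInterval_of_initSeg hEF hMlen hME hMG hML hLE
  · have hGF : G.FinDist F := (hMG.apply_zero.symm.trans hME.apply_zero).trans hEF
    exact (FPath.memInterval_or_memInterval_of_initSeg hGF (hMlen.trans (E.meetLen_comm G))
      hMG hME hML hLG).symm.imp FPath.MemInterval.symm FPath.MemInterval.symm

/-- `[E,G] ⊆ [E,F] ∪ [F,G]` for pairwise finite-distance `E, F, G`. -/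
theorem fpath_interval_subset_union {X : Type*} [MetricSpace X] (E F G : FPath X)
    (hEF : E.FinDist F) (hFG : F.FinDist G) (hEG : E.FinDist G) :
    ∀ L : FPath X, FPath.MemInterval E G L →
      FPath.MemInterval E F L ∨ FPath.MemInterval F G L :=
  fpath_interval_subset_union_general E F G hEF
end
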